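/- Let n ≥ 1. If f ∈ nL¹(ℝⁿ, H̃^n_∞) (the case δ = n) and f is Lebesgue measurable, then f is an nL¹-limit of continuous functions: there is a sequence of continuous functions φ_i : ℝⁿ → ℝ with ∫_{ℝⁿ} |f − φ_i| dH̃^n_∞ → 0 as i → ∞. -/

import Mathlib

open MeasureTheory Set Metric Filter Topology
open scoped ENNReal

noncomputable section

/-- Euclidean space `ℝⁿ`. -/
abbrev En (n : ℕ) : Type := EuclideanSpace ℝ (Fin n)

/-- The half-open dyadic cube `2^k (m + [0,1)ⁿ)`, `k : ℤ`, `m : ℤⁿ`. -/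
def dyadicCube (n : ℕ) (k : ℤ) (m : Fin n → ℤ) : Set (En n) :=
  {x | ∀ i, (m i : ℝ) * 2 ^ k ≤ x i ∧ x i < ((m i : ℝ) + 1) * 2 ^ k}

/-- The `δ`-dimensional dyadic Hausdorff content `H̃^δ_∞`: the infimum of `Σ ℓ(Q_i)^δ`
over all countable collections of dyadic cubes whose union's interior covers `E`. -/
def dyadicContent (n : ℕ) (δ : ℝ) (E : Set (En n)) : ℝ≥0∞ :=
  ⨅ (c : ℕ → ℤ × (Fin n → ℤ))
    (_ : E ⊆ interior (⋃ i, dyadicCube n (c i).1 (c i).2)),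
    ∑' i, ENNReal.ofReal (((2 : ℝ) ^ (c i).1) ^ δ)

/-- The Choquet integral `∫_Ω f dH̃^δ_∞ := ∫_0^∞ H̃^δ_∞({x ∈ Ω : f x > t}) dt`
of a `[0,∞]`-valued function over `Ω ⊆ ℝⁿ`. -/
def choquetIntegral (n : ℕ) (δ : ℝ) (Ω : Set (En n)) (f : En n → ℝ≥0∞) : ℝ≥0∞ :=
  ∫⁻ t in Ioi (0 : ℝ), dyadicContent n δ {x | x ∈ Ω ∧ ENNReal.ofReal t < f x}

/-- The Choquet integral `∫_Ω |f| dH̃^δ_∞` of a real-valued function. -/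
def choquetIntegralAbs (n : ℕ) (δ : ℝ) (Ω : Set (En n)) (f : En n → ℝ) : ℝ≥0∞ :=
  choquetIntegral n δ Ω (fun x => ENNReal.ofReal |f x|)

/-- The Choquet integral `∫_Ω |f| dH̃^δ_∞` of an extended-real-valued function. -/
def choquetIntegralEAbs (n : ℕ) (δ : ℝ) (Ω : Set (En n)) (f : En n → EReal) : ℝ≥0∞ :=
  choquetIntegral n δ Ω (fun x => (f x).abs)

/-- The ball average `f^δ_{B(x,r)} := (1/H̃^δ_∞(B(x,r))) ∫_{B(x,r)} f dH̃^δ_∞`. -/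
def ballAvg (n : ℕ) (δ : ℝ) (f : En n → ℝ≥0∞) (x : En n) (r : ℝ) : ℝ≥0∞ :=
  choquetIntegral n δ (ball x r) f / dyadicContent n δ (ball x r)

/-- The Hausdorff-content centred maximal function `M^δ f(x)`. -/
def maximal (n : ℕ) (δ : ℝ) (f : En n → ℝ≥0∞) (x : En n) : ℝ≥0∞ :=
  ⨆ (r : ℝ) (_ : 0 < r), ballAvg n δ f x r

/-- `f^δ_*(x) := limsup_{r→0⁺} (1/H̃^δ_∞(B(x,r))) ∫_{B(x,r)} |f(y) − f(x)| dH̃^δ_∞(y)`. -/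
def lebDev (n : ℕ) (δ : ℝ) (f : En n → ℝ) (x : En n) : ℝ≥0∞ :=
  limsup (fun r : ℝ => choquetIntegralAbs n δ (ball x r) (fun y => f y - f x) /
    dyadicContent n δ (ball x r)) (𝓝[>] (0 : ℝ))

/-- `limsup_{r→0⁺} f^δ_{B(x,r)}` of the ball averages. -/
def limsupAvg (n : ℕ) (δ : ℝ) (f : En n → ℝ≥0∞) (x : En n) : ℝ≥0∞ :=
  limsup (fun r : ℝ => ballAvg n δ f x r) (𝓝[>] (0 : ℝ))

/-!
For `δ = n` the dyadic Hausdorff content is Lebesgue outer measure. Covering by cubes gives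
`volume ≤ H̃^n_∞`. Conversely an open set is the disjoint union of its maximal dyadic
subcubes, so its content is at most its volume, and outer regularity extends this to all sets.
Hence the Choquet integral against `H̃^n_∞` is the Lebesgue integral, `nL¹(ℝⁿ, H̃^n_∞)` is
`L¹(ℝⁿ)` on measurable functions, and continuous functions are dense there.
-/

section DyadicCube

variable {n : ℕ}

def dyadicIndex (k : ℤ) (x : En n) : Fin n → ℤ := fun i => ⌊x i / 2 ^ k⌋

lemma mem_dyadicCube_iff {k : ℤ} {m : Fin n → ℤ} {x : En n} :
    x ∈ dyadicCube n k m ↔ dyadicIndex k x = m := by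
  have h2 : (0 : ℝ) < 2 ^ k := by positivity
  simp only [dyadicCube, Set.mem_ofPred_eq, funext_iff, dyadicIndex, Int.floor_eq_iff,
    le_div_iff₀ h2, div_lt_iff₀ h2]

lemma mem_dyadicCube_dyadicIndex (k : ℤ) (x : En n) : x ∈ dyadicCube n k (dyadicIndex k x) :=
  mem_dyadicCube_iff.2 rfl

lemma dyadicIndex_of_le {k k' : ℤ} (h : k ≤ k') (x : En n) :
    dyadicIndex k' x = fun i => dyadicIndex k x i / (2 ^ (k' - k).toNat : ℕ) := by
  have hk' : (2 : ℝ) ^ k' = 2 ^ k * ((2 ^ (k' - k).toNat : ℕ) : ℝ) := by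
    rw [Nat.cast_pow, Nat.cast_ofNat, ← zpow_natCast, Int.toNat_of_nonneg (by omega),
      ← zpow_add₀ two_ne_zero, add_sub_cancel]
  funext i
  simp only [dyadicIndex, hk', ← div_div, Int.floor_div_natCast]

lemma dyadicCube_subset_of_le {k k' : ℤ} (h : k ≤ k') {m m' : Fin n → ℤ}
    (hne : (dyadicCube n k m ∩ dyadicCube n k' m').Nonempty) :
    dyadicCube n k m ⊆ dyadicCube n k' m' := by
  obtain ⟨y, hy, hy'⟩ := hne
  intro z hz
  rw [mem_dyadicCube_iff] at hy hy' hz ⊢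
  rw [dyadicIndex_of_le h, hz, ← hy, ← dyadicIndex_of_le h, hy']

lemma dist_le_of_mem_dyadicCube {k : ℤ} {m : Fin n → ℤ} {x y : En n}
    (hx : x ∈ dyadicCube n k m) (hy : y ∈ dyadicCube n k m) :
    dist x y ≤ √n * 2 ^ k := by
  have hcoord : ∀ i, dist (x i) (y i) ^ 2 ≤ ((2 : ℝ) ^ k) ^ 2 := by
    intro i
    obtain ⟨⟨hx₁, hx₂⟩, ⟨hy₁, hy₂⟩⟩ := And.intro (hx i) (hy i)
    rw [Real.dist_eq, sq_abs]
    nlinarith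
  calc dist x y = √(∑ i, dist (x i) (y i) ^ 2) := EuclideanSpace.dist_eq x y
    _ ≤ √(∑ _i : Fin n, ((2 : ℝ) ^ k) ^ 2) :=
        Real.sqrt_le_sqrt (Finset.sum_le_sum fun i _ => hcoord i)
    _ = √n * 2 ^ k := by
        rw [Finset.sum_const, Finset.card_univ, Fintype.card_fin, nsmul_eq_mul,
          Real.sqrt_mul (Nat.cast_nonneg n), Real.sqrt_sq (by positivity)]

lemma exists_dyadicCube_subset_of_isOpen {U : Set (En n)} (hU : IsOpen U) {x : En n}
    (hx : x ∈ U) : ∃ N : ℕ, dyadicCube n (-N) (dyadicIndex (-N) x) ⊆ U := by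
  obtain ⟨ε, hε, hball⟩ := Metric.isOpen_iff.mp hU x hx
  have hsmall : Tendsto (fun N : ℕ => √n * (2⁻¹ : ℝ) ^ N) atTop (𝓝 0) := by
    simpa using (tendsto_pow_atTop_nhds_zero_of_lt_one (r := (2⁻¹ : ℝ)) (by norm_num)
      (by norm_num)).const_mul √n
  obtain ⟨N, hN⟩ := (hsmall.eventually (gt_mem_nhds hε)).exists
  refine ⟨N, fun y hy => hball (mem_ball.2 ?_)⟩
  calc dist y x ≤ √n * 2 ^ (-N : ℤ) := dist_le_of_mem_dyadicCube hy (mem_dyadicCube_dyadicIndex _ x)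
    _ < ε := by rwa [zpow_neg, zpow_natCast, ← inv_pow]

lemma dyadicCube_eq_preimage (k : ℤ) (m : Fin n → ℤ) :
    dyadicCube n k m = (MeasurableEquiv.toLp 2 (Fin n → ℝ)).symm ⁻¹'
      univ.pi fun i => Ico ((m i : ℝ) * 2 ^ k) (((m i : ℝ) + 1) * 2 ^ k) := by
  ext x
  simp [dyadicCube, Set.mem_pi, MeasurableEquiv.coe_toLp_symm]

lemma measurableSet_dyadicCube (k : ℤ) (m : Fin n → ℤ) : MeasurableSet (dyadicCube n k m) := by
  rw [dyadicCube_eq_preimage]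
  exact (MeasurableEquiv.toLp 2 (Fin n → ℝ)).symm.measurable
    (MeasurableSet.univ_pi fun _ => measurableSet_Ico)

lemma volume_dyadicCube (k : ℤ) (m : Fin n → ℤ) :
    volume (dyadicCube n k m) = ENNReal.ofReal (((2 : ℝ) ^ k) ^ (n : ℝ)) := by
  rw [dyadicCube_eq_preimage,
    (EuclideanSpace.volume_preserving_symm_measurableEquiv_toLp (Fin n)).measure_preimage
      (MeasurableSet.univ_pi fun _ => measurableSet_Ico).nullMeasurableSet,
    volume_pi_pi]
  simp_rw [Real.volume_Ico, ← sub_mul, add_sub_cancel_left, one_mul]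
  rw [Finset.prod_const, Finset.card_univ, Fintype.card_fin, Real.rpow_natCast,
    ENNReal.ofReal_pow (by positivity)]

/-- The maximal dyadic cubes of side at most `1` inside `U` tile `U`. -/
theorem IsOpen.exists_pairwiseDisjoint_dyadicCube_biUnion_eq {U : Set (En n)} (hU : IsOpen U) :
    ∃ S : Set (ℤ × (Fin n → ℤ)), S.PairwiseDisjoint (fun p => dyadicCube n p.1 p.2) ∧
      ⋃ p ∈ S, dyadicCube n p.1 p.2 = U := by
  have hlevel : ∀ x ∈ U, ∃ k : ℤ, (k ≤ 0 ∧ dyadicCube n k (dyadicIndex k x) ⊆ U) ∧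
      ∀ k', k' ≤ 0 ∧ dyadicCube n k' (dyadicIndex k' x) ⊆ U → k' ≤ k := by
    intro x hx
    obtain ⟨N, hN⟩ := exists_dyadicCube_subset_of_isOpen hU hx
    exact Int.exists_greatest_of_bdd ⟨0, fun k hk => hk.1⟩ ⟨-N, by omega, hN⟩
  choose! lvl hlvl hlvl_max using hlevel
  set cube : En n → ℤ × (Fin n → ℤ) := fun x => (lvl x, dyadicIndex (lvl x) x)
  have cube_eq : ∀ x ∈ U, ∀ y ∈ U, lvl x ≤ lvl y →
      (dyadicCube n (lvl x) (dyadicIndex (lvl x) x) ∩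
        dyadicCube n (lvl y) (dyadicIndex (lvl y) y)).Nonempty → cube x = cube y := by
    intro x hx y hy hle hne
    have hidx : dyadicIndex (lvl y) x = dyadicIndex (lvl y) y :=
      mem_dyadicCube_iff.1 (dyadicCube_subset_of_le hle hne (mem_dyadicCube_dyadicIndex _ x))
    have hge : lvl y ≤ lvl x := hlvl_max x hx _ ⟨(hlvl y hy).1, hidx ▸ (hlvl y hy).2⟩
    have hlvl_eq : lvl x = lvl y := le_antisymm hle hge
    change (lvl x, dyadicIndex (lvl x) x) = (lvl y, dyadicIndex (lvl y) y)
    rw [hlvl_eq, hidx]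
  refine ⟨cube '' U, ?_, ?_⟩
  · rintro _ ⟨x, hx, rfl⟩ _ ⟨y, hy, rfl⟩ hne
    rw [Function.onFun, Set.disjoint_iff_inter_eq_empty, ← not_nonempty_iff_eq_empty]
    intro hint
    rcases le_total (lvl x) (lvl y) with h | h
    · exact hne (cube_eq x hx y hy h hint)
    · exact hne (cube_eq y hy x hx h (inter_comm _ _ ▸ hint)).symm
  · refine subset_antisymm (iUnion₂_subset ?_) fun x hx =>
      mem_biUnion (mem_image_of_mem _ hx) (mem_dyadicCube_dyadicIndex _ x)
    rintro _ ⟨x, hx, rfl⟩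
    exact (hlvl x hx).2

end DyadicCube

section DyadicContent

variable {n : ℕ}

lemma dyadicContent_mono {δ : ℝ} {E F : Set (En n)} (h : E ⊆ F) :
    dyadicContent n δ E ≤ dyadicContent n δ F :=
  le_iInf₂ fun c hc => iInf₂_le c (h.trans hc)

lemma volume_le_dyadicContent (E : Set (En n)) : volume E ≤ dyadicContent n n E := by
  refine le_iInf₂ fun c hc => ?_
  calc volume E ≤ volume (⋃ i, dyadicCube n (c i).1 (c i).2) :=
        measure_mono (hc.trans interior_subset)
    _ ≤ ∑' i, volume (dyadicCube n (c i).1 (c i).2) := measure_iUnion_le _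
    _ = ∑' i, ENNReal.ofReal (((2 : ℝ) ^ (c i).1) ^ (n : ℝ)) := by simp_rw [volume_dyadicCube]

lemma tsum_ofReal_two_zpow_rpow_le {δ : ℝ} (hδ : 1 ≤ δ) (N : ℕ) :
    ∑' j : ℕ, ENNReal.ofReal (((2 : ℝ) ^ (-(N + 1 + j : ℕ) : ℤ)) ^ δ) ≤ 2⁻¹ ^ N := by
  have hterm : ∀ j : ℕ, ENNReal.ofReal (((2 : ℝ) ^ (-(N + 1 + j : ℕ) : ℤ)) ^ δ) ≤
      2⁻¹ ^ (N + 1) * 2⁻¹ ^ j := by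
    intro j
    have hle_one : (2 : ℝ) ^ (-(N + 1 + j : ℕ) : ℤ) ≤ 1 :=
      zpow_le_one_of_nonpos₀ one_le_two (by omega)
    calc ENNReal.ofReal (((2 : ℝ) ^ (-(N + 1 + j : ℕ) : ℤ)) ^ δ)
        ≤ ENNReal.ofReal ((2 : ℝ) ^ (-(N + 1 + j : ℕ) : ℤ)) :=
          ENNReal.ofReal_le_ofReal (Real.rpow_le_self_of_le_one (by positivity) hle_one hδ)
      _ = 2⁻¹ ^ (N + 1) * 2⁻¹ ^ j := by
          rw [zpow_neg, zpow_natCast, ← inv_pow, ENNReal.ofReal_pow (by norm_num),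
            ENNReal.ofReal_inv_of_pos two_pos, ENNReal.ofReal_ofNat, pow_add]
  calc _ ≤ ∑' j : ℕ, 2⁻¹ ^ (N + 1) * (2⁻¹ : ℝ≥0∞) ^ j := ENNReal.tsum_le_tsum hterm
    _ = 2⁻¹ ^ N := by
        rw [ENNReal.tsum_mul_left, ENNReal.tsum_geometric, ENNReal.one_sub_inv_two, inv_inv,
          pow_succ, mul_assoc, ENNReal.inv_mul_cancel two_ne_zero ENNReal.ofNat_ne_top, mul_one]

/-- A cover indexed by an arbitrary (possibly finite) set of cubes is padded to a sequence
with cubes of arbitrarily small total size. -/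
lemma dyadicContent_le_tsum {δ : ℝ} (hδ : 1 ≤ δ) {E : Set (En n)}
    {S : Set (ℤ × (Fin n → ℤ))} (hE : E ⊆ interior (⋃ p ∈ S, dyadicCube n p.1 p.2)) :
    dyadicContent n δ E ≤ ∑' p : S, ENNReal.ofReal (((2 : ℝ) ^ p.1.1) ^ δ) := by
  set size := fun p : ℤ × (Fin n → ℤ) => ENNReal.ofReal (((2 : ℝ) ^ p.1) ^ δ)
  refine ENNReal.le_of_forall_pos_le_add fun ε hε _ => ?_
  obtain ⟨N, hN⟩ := ENNReal.exists_inv_two_pow_lt (ENNReal.coe_ne_zero.2 hε.ne')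
  set pad : ℕ → ℤ × (Fin n → ℤ) := fun j => (-(N + 1 + j : ℕ), 0)
  have hpad : Function.Injective pad := fun a b hab => by
    have := congrArg Prod.fst hab
    simp only [pad, neg_inj, Nat.cast_inj] at this
    omega
  set S' := S ∪ range pad
  have : Infinite S' := ((infinite_range_of_injective hpad).mono subset_union_right).to_subtype
  obtain ⟨e⟩ : Nonempty (ℕ ≃ S') := nonempty_equiv_of_countable
  have hcover : E ⊆ interior (⋃ i, dyadicCube n (e i).1.1 (e i).1.2) := by
    refine hE.trans (interior_mono (iUnion₂_subset fun p hp => ?_))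
    exact subset_iUnion_of_subset (e.symm ⟨p, Or.inl hp⟩) (by rw [Equiv.apply_symm_apply])
  calc dyadicContent n δ E ≤ ∑' i, size (e i) := iInf₂_le (fun i => (e i).1) hcover
    _ = ∑' p : S', size p := e.tsum_eq fun p : S' => size p
    _ ≤ ∑' p : S, size p + ∑' p : range pad, size p := ENNReal.tsum_union_le size S (range pad)
    _ = ∑' p : S, size p + ∑' j, size (pad j) := by rw [tsum_range size hpad]
    _ ≤ ∑' p : S, size p + ε := by
        gcongr
        exact (tsum_ofReal_two_zpow_rpow_le hδ N).trans hN.le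

lemma dyadicContent_le_volume_of_isOpen (hn : 1 ≤ n) {U : Set (En n)} (hU : IsOpen U) :
    dyadicContent n n U ≤ volume U := by
  obtain ⟨S, hdisj, hunion⟩ := hU.exists_pairwiseDisjoint_dyadicCube_biUnion_eq
  calc dyadicContent n n U ≤ ∑' p : S, ENNReal.ofReal (((2 : ℝ) ^ p.1.1) ^ (n : ℝ)) :=
        dyadicContent_le_tsum (by exact_mod_cast hn : (1 : ℝ) ≤ n) (by rw [hunion, hU.interior_eq])
    _ = ∑' p : S, volume (dyadicCube n p.1.1 p.1.2) := by simp_rw [volume_dyadicCube]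
    _ = volume U := by
        rw [← measure_biUnion S.to_countable hdisj fun p _ => measurableSet_dyadicCube p.1 p.2,
          hunion]

theorem dyadicContent_eq_volume (hn : 1 ≤ n) (E : Set (En n)) :
    dyadicContent n n E = volume E := by
  refine le_antisymm ?_ (volume_le_dyadicContent E)
  rw [E.measure_eq_iInf_isOpen]
  exact le_iInf₂ fun U hEU => le_iInf fun hU =>
    (dyadicContent_mono hEU).trans (dyadicContent_le_volume_of_isOpen hn hU)

theorem choquetIntegralAbs_eq_eLpNorm (hn : 1 ≤ n) {g : En n → ℝ}
    (hg : AEMeasurable g volume) :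
    choquetIntegralAbs n n univ g = eLpNorm g 1 volume := by
  simp_rw [eLpNorm_one_eq_lintegral_enorm, Real.enorm_eq_ofReal_abs]
  rw [choquetIntegralAbs, choquetIntegral,
    lintegral_eq_lintegral_meas_lt volume (.of_forall fun x => abs_nonneg (g x)) hg.abs]
  refine setLIntegral_congr_fun measurableSet_Ioi fun t ht => ?_
  simp only [mem_univ, true_and, ENNReal.ofReal_lt_ofReal_iff_of_nonneg (le_of_lt ht),
    dyadicContent_eq_volume hn]

end DyadicContent

/-- a Lebesgue measurable function in `nL¹(ℝⁿ, H̃^n_∞)` is an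
`nL¹`-limit of continuous functions. -/
theorem measurable_is_nL1_limit (n : ℕ) (hn : 1 ≤ n) (f : En n → ℝ)
    (hf : choquetIntegralAbs n (n : ℝ) univ f < ⊤)
    (hmeas : NullMeasurable f (volume : Measure (En n))) :
    ∃ φ : ℕ → En n → ℝ, (∀ i, Continuous (φ i)) ∧
      Tendsto (fun i => choquetIntegralAbs n (n : ℝ) univ (fun x => f x - φ i x))
        atTop (𝓝 0) := by
  have hf_meas : AEMeasurable f volume := hmeas.aemeasurable
  have hf_L1 : MemLp f 1 volume :=
    ⟨hf_meas.aestronglyMeasurable, by rwa [← choquetIntegralAbs_eq_eLpNorm hn hf_meas]⟩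
  have happrox (i : ℕ) : ∃ g : En n → ℝ, Continuous g ∧ eLpNorm (f - g) 1 volume ≤ 2⁻¹ ^ i := by
    obtain ⟨g, -, hle, hcont, -⟩ :=
      hf_L1.exists_hasCompactSupport_eLpNorm_sub_le ENNReal.one_ne_top (ε := 2⁻¹ ^ i)
        (pow_ne_zero i (by simp))
    exact ⟨g, hcont, hle⟩
  choose φ hφ_cont hφ_le using happrox
  refine ⟨φ, hφ_cont, tendsto_of_tendsto_of_tendsto_of_le_of_le tendsto_const_nhds
    (ENNReal.tendsto_pow_atTop_nhds_zero_of_lt_one (ENNReal.inv_lt_one.2 ENNReal.one_lt_two))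
    (fun _ => zero_le) fun i => ?_⟩
  exact (choquetIntegralAbs_eq_eLpNorm hn (hf_meas.sub (hφ_cont i).aemeasurable)).trans_le
    (hφ_le i)
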